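/- arXiv:1512.04142 — 4 statements merged into one kernel-verified Lean document; each statement's English description precedes it below -/
import Mathlib

section
/- Let a be a symmetric, primitive random walk on ℤ with characteristic function f(x) = ∑_{k∈ℤ} a(k) e^{ikx}. If a has an even step size (there exists an even integer n with a(n) ≠ 0), then for every real x with |f(x)| = 1 there exists k ∈ ℤ with x = 2πk. -/
open Filter Asymptotics

/-- A random walk on `ℤ`: nonnegative step probabilities summing to `1`,
with `limsup a(n)^(1/n) < 1` (taken over both tails). -/
def IsRandomWalk (a : ℤ → ℝ) : Prop :=
  (∀ n : ℤ, 0 ≤ a n) ∧ (∑' n : ℤ, a n) = 1 ∧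
    Filter.limsup (fun n : ℕ => (max (a (n : ℤ)) (a (-(n : ℤ)))) ^ (1 / (n : ℝ)))
      Filter.atTop < 1

/-- The `n`-th return probability of the random walk `a`: the value at `0` of the
`n`-fold convolution of `a` with itself. -/
noncomputable def returnProb (a : ℤ → ℝ) (n : ℕ) : ℝ :=
  ∑' k : Fin n → ℤ, if (∑ i, k i) = 0 then ∏ i, a (k i) else 0

/-- The characteristic function `f(x) = ∑_{k ∈ ℤ} a(k) e^{i k x}` of the walk `a`. -/
noncomputable def charFun (a : ℤ → ℝ) (x : ℝ) : ℂ :=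
  ∑' k : ℤ, (a k : ℂ) * Complex.exp (Complex.I * k * x)

/-!
If `|f(x)| = 1`, equality holds in `|∑ a(k) e^{ikx}| ≤ ∑ a(k)`, so `e^{ikx}` takes one common value
`z` on the support `S` of `a`. Symmetry puts both `n` and `-n` in `S`, so `z² = e^{inx} e^{-inx} = 1`;
hence `e^{2ikx} = 1` on `S`, and since `S` generates `ℤ`, `e^{2ix} = 1`. For an even step `n = 2t`
this gives `z = (e^{2ix})^t = 1`, so `e^{ikx} = 1` on `S` and, again by primitivity, `e^{ix} = 1`.
-/

theorem eq_of_hasSum_smul_of_norm_eq_one {ι E : Type*} [NormedAddCommGroup E]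
    [InnerProductSpace ℝ E] {p : ι → ℝ} {w : ι → E} {z : E} (hp : ∀ i, 0 ≤ p i)
    (hp1 : HasSum p 1) (hw : ∀ i, ‖w i‖ = 1) (hz : HasSum (fun i => p i • w i) z)
    (hz1 : ‖z‖ = 1) {i : ι} (hi : p i ≠ 0) : w i = z := by
  have hinner : HasSum (fun j => p j * inner ℝ z (w j)) 1 := by
    simpa [inner_smul_right, real_inner_self_eq_norm_sq, hz1] using (innerSL ℝ z).hasSum hz
  have hdefect : HasSum (fun j => p j * (1 - inner ℝ z (w j))) 0 := by
    simpa [mul_sub] using hp1.sub hinner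
  have hnonneg : ∀ j, 0 ≤ p j * (1 - inner ℝ z (w j)) := fun j =>
    mul_nonneg (hp j) (sub_nonneg.2 (by simpa [hz1, hw j] using real_inner_le_norm z (w j)))
  have hi1 : inner ℝ z (w i) = 1 := by
    have hdefect_i := congrFun ((hasSum_zero_iff_of_nonneg hnonneg).1 hdefect) i
    rw [Pi.zero_apply, mul_eq_zero] at hdefect_i
    exact (sub_eq_zero.1 (hdefect_i.resolve_left hi)).symm
  exact ((inner_eq_one_iff_of_norm_eq_one hz1 (hw i)).1 hi1).symm

theorem eq_one_of_forall_zpow_eq_one {G : Type*} [Group G] {S : Set ℤ}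
    (hS : AddSubgroup.closure S = ⊤) {g : G} (h : ∀ k ∈ S, g ^ k = 1) : g = 1 := by
  have hmem : (1 : ℤ) ∈ AddSubgroup.closure S := hS ▸ AddSubgroup.mem_top 1
  simpa using AddSubgroup.closure_induction (p := fun k _ => g ^ k = 1) h (zpow_zero g)
    (fun k l _ _ hk hl => by rw [zpow_add, hk, hl, one_mul])
    (fun k _ hk => by rw [zpow_neg, hk, inv_one]) hmem

theorem eq_one_of_forall_zpow_eq_of_even {G : Type*} [Group G] {S : Set ℤ}
    (hS : AddSubgroup.closure S = ⊤) {g : G} {n : ℤ} (hn : n ∈ S) (hneg : -n ∈ S)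
    (heven : Even n) (h : ∀ k ∈ S, g ^ k = g ^ n) : g = 1 := by
  have hsq : g ^ (2 : ℤ) = 1 := eq_one_of_forall_zpow_eq_one hS fun k hk => by
    rw [← zpow_mul, mul_comm, zpow_mul, h k hk, zpow_two]
    nth_rw 2 [← h (-n) hneg]
    rw [← zpow_add, add_neg_cancel, zpow_zero]
  obtain ⟨t, rfl⟩ := heven
  exact eq_one_of_forall_zpow_eq_one hS fun k hk => by
    rw [h k hk, ← two_mul, zpow_mul, hsq, one_zpow]

theorem IsRandomWalk.hasSum_one {a : ℤ → ℝ} (ha : IsRandomWalk a) : HasSum a 1 := by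
  have hsum : Summable a := by
    by_contra h
    simpa [tsum_eq_zero_of_not_summable h] using ha.2.1
  exact ha.2.1 ▸ hsum.hasSum

theorem hasSum_charFun {a : ℤ → ℝ} (ha : Summable a) (x : ℝ) :
    HasSum (fun k : ℤ => a k • (↑(Circle.exp x ^ k) : ℂ)) (charFun a x) := by
  have hterm : ∀ k : ℤ,
      a k • (↑(Circle.exp x ^ k) : ℂ) = a k * Complex.exp (Complex.I * k * x) := by
    intro k
    rw [← Circle.exp_intCast_mul, Circle.coe_exp, Complex.real_smul]
    push_cast
    ring_nf
  simp only [hterm]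
  refine Summable.hasSum (Summable.of_norm_bounded (summable_abs_iff.2 ha) fun k => ?_)
  simp [Complex.norm_exp]

/-- For a symmetric, primitive random walk having an even step size, the
characteristic function has absolute value `1` only at multiples of `2π`. -/
theorem abs_charFun_eq_one_even_step (a : ℤ → ℝ) (ha : IsRandomWalk a)
    (hsym : ∀ n : ℤ, a n = a (-n))
    (hprim : AddSubgroup.closure {n : ℤ | a n ≠ 0} = ⊤)
    (heven : ∃ n : ℤ, Even n ∧ a n ≠ 0) :
    ∀ x : ℝ, ‖charFun a x‖ = 1 → ∃ k : ℤ, x = 2 * Real.pi * k := by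
  intro x hx
  have hconst : ∀ k, a k ≠ 0 → (↑(Circle.exp x ^ k) : ℂ) = charFun a x := fun k hk =>
    eq_of_hasSum_smul_of_norm_eq_one ha.1 ha.hasSum_one (fun k => Circle.norm_coe _)
      (hasSum_charFun ha.hasSum_one.summable x) hx hk
  obtain ⟨n, hn_even, hn⟩ := heven
  have hexp : Circle.exp x = 1 :=
    eq_one_of_forall_zpow_eq_of_even hprim hn (by simpa [← hsym] using hn) hn_even
      fun k hk => Subtype.ext ((hconst k hk).trans (hconst n hn).symm)
  obtain ⟨m, hm⟩ := Circle.exp_eq_one.1 hexp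
  exact ⟨m, by rw [hm]; ring⟩
end

section
/- Let a be a symmetric random walk on ℤ with a(n) ≠ 0 for some n ≠ 0, and let f(x) = ∑_{k∈ℤ} a(k) e^{ikx} be its characteristic function. Then there exists a function h, complex analytic (holomorphic) on an open neighborhood of 0 in ℂ, such that f(x) = h(x²) for all x in a neighborhood of 0, h(0) = 1, and h'(0) < 0 (indeed h'(0) = -(1/2)∑_{k∈ℤ} k² a(k)). -/
/-!
The limsup condition gives an exponential moment `∑ a(k) e^{t|k|} < ∞` for some `t > 0`.
Since `cos √z = ∑ (-1)ⁿ zⁿ / (2n)!` is entire with `|cos √z| ≤ cosh √|z|`, the series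
`h(z) = ∑ a(k) cos (k √z)` then converges uniformly on `|z| < t²`, so `h` is holomorphic there
and can be differentiated termwise: `h'(0) = -(1/2) ∑ k² a(k)`. By symmetry of `a`,
`f(x) = ∑ a(k) cos (k x) = h(x²)`.
-/

open Filter Asymptotics

open Complex
open scoped Nat

lemma Real.cosh_le_exp_abs (x : ℝ) : Real.cosh x ≤ Real.exp |x| := by
  rw [← Real.cosh_abs, Real.cosh_eq]
  linarith [Real.exp_le_exp.2 (neg_le_self (abs_nonneg x))]

noncomputable def cosSqrt (z : ℂ) : ℂ :=
  ∑' n : ℕ, (-1) ^ n * z ^ n / (2 * n)!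

lemma norm_cosSqrt_term_le {z : ℂ} {s : ℝ} (hz : ‖z‖ ≤ s ^ 2) (n : ℕ) :
    ‖(-1) ^ n * z ^ n / ((2 * n)! : ℂ)‖ ≤ s ^ (2 * n) / (2 * n)! := by
  rw [norm_div, norm_mul, norm_pow, norm_pow, norm_neg, norm_one, one_pow, one_mul,
    Complex.norm_natCast, pow_mul]
  gcongr

lemma norm_cosSqrt_le {z : ℂ} {s : ℝ} (hz : ‖z‖ ≤ s ^ 2) : ‖cosSqrt z‖ ≤ Real.cosh s :=
  tsum_of_norm_bounded (Real.hasSum_cosh s) (norm_cosSqrt_term_le hz)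

lemma cosSqrt_sq (z : ℂ) : cosSqrt (z ^ 2) = cos z := by
  simp_rw [cosSqrt, ← pow_mul, cos_eq_tsum]

lemma cosSqrt_zero : cosSqrt 0 = 1 := by
  simpa using cosSqrt_sq 0

lemma differentiableOn_cosSqrt (s : ℝ) : DifferentiableOn ℂ cosSqrt (Metric.ball 0 (s ^ 2)) :=
  differentiableOn_tsum_of_summable_norm (Real.hasSum_cosh s).summable
    (fun n => by fun_prop) Metric.isOpen_ball
    (fun n _ hw => norm_cosSqrt_term_le (mem_ball_zero_iff.1 hw).le n)

@[fun_prop]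
lemma differentiable_cosSqrt : Differentiable ℂ cosSqrt := fun z =>
  (differentiableOn_cosSqrt (‖z‖ + 1)).differentiableAt
    (Metric.isOpen_ball.mem_nhds (by rw [mem_ball_zero_iff]; nlinarith [norm_nonneg z]))

lemma hasDerivAt_cosSqrt_zero : HasDerivAt cosSqrt (-1 / 2) 0 := by
  have h := hasSum_deriv_of_summable_norm (Real.hasSum_cosh 1).summable
    (fun n => by fun_prop) Metric.isOpen_ball
    (fun n _ hw => norm_cosSqrt_term_le (by simpa using (mem_ball_zero_iff.1 hw).le) n)
    (Metric.mem_ball_self one_pos)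
  have hderiv : deriv cosSqrt 0 = -1 / 2 := by
    unfold cosSqrt
    rw [← h.tsum_eq, tsum_eq_single 1 fun n hn => ?_]
    · simp
    · rcases Nat.eq_zero_or_pos n with rfl | hn0
      · simp
      · simp [zero_pow (by omega : n - 1 ≠ 0)]
  exact hderiv ▸ differentiable_cosSqrt.differentiableAt.hasDerivAt

lemma exists_summable_mul_exp_of_limsup_rpow_lt_one {b : ℕ → ℝ} (hb : ∀ n, 0 ≤ b n)
    (hbdd : IsBoundedUnder (· ≤ ·) atTop fun n => b n ^ (1 / (n : ℝ)))
    (hlim : limsup (fun n => b n ^ (1 / (n : ℝ))) atTop < 1) :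
    ∃ t > 0, Summable fun n => b n * Real.exp (t * n) := by
  obtain ⟨r, hr, hr1⟩ := exists_between (max_lt hlim one_pos)
  obtain ⟨q, hrq, hq1⟩ := exists_between hr1
  have hr0 : 0 < r := (le_max_right _ _).trans_lt hr
  have hq0 : 0 < q := hr0.trans hrq
  -- `t = log (q / r)` turns the root bound `b n ≤ rⁿ` into `b n eᵗⁿ ≤ qⁿ`
  refine ⟨Real.log (q / r), Real.log_pos ((one_lt_div hr0).2 hrq), ?_⟩
  refine .of_norm_bounded_eventually_nat (summable_geometric_of_lt_one hq0.le hq1) ?_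
  filter_upwards [eventually_lt_of_limsup_lt ((le_max_left _ _).trans_lt hr) hbdd,
    eventually_ne_atTop 0] with n hn hn0
  have hbn : b n ≤ r ^ n := by
    rw [← Real.rpow_inv_natCast_pow (hb n) hn0, ← one_div]
    exact pow_le_pow_left₀ (Real.rpow_nonneg (hb n) _) hn.le n
  calc ‖b n * Real.exp (Real.log (q / r) * n)‖ = b n * (q / r) ^ n := by
        rw [Real.exp_mul, Real.rpow_natCast, Real.exp_log (div_pos hq0 hr0),
          Real.norm_of_nonneg (mul_nonneg (hb n) (by positivity))]
    _ ≤ r ^ n * (q / r) ^ n := by gcongr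
    _ = q ^ n := by rw [← mul_pow, mul_div_cancel₀ _ hr0.ne']

namespace IsRandomWalk

variable {a : ℤ → ℝ}

lemma summable (ha : IsRandomWalk a) : Summable a := by
  by_contra h
  simpa [tsum_eq_zero_of_not_summable h] using ha.2.1

lemma le_one (ha : IsRandomWalk a) (n : ℤ) : a n ≤ 1 :=
  ha.2.1 ▸ ha.summable.le_tsum n fun m _ => ha.1 m

lemma exists_summable_mul_exp_abs (ha : IsRandomWalk a) :
    ∃ t > 0, Summable fun k : ℤ => a k * Real.exp (t * |(k : ℝ)|) := by
  have hpos := ha.1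
  have hb : ∀ n : ℕ, 0 ≤ max (a n) (a (-n)) := fun n => (hpos n).trans (le_max_left _ _)
  have hbdd : IsBoundedUnder (· ≤ ·) atTop
      fun n : ℕ => max (a n) (a (-n)) ^ (1 / (n : ℝ)) :=
    isBoundedUnder_of ⟨1, fun n => Real.rpow_le_one (hb n)
      (max_le (ha.le_one _) (ha.le_one _)) (by positivity)⟩
  obtain ⟨t, ht, hsum⟩ := exists_summable_mul_exp_of_limsup_rpow_lt_one hb hbdd ha.2.2
  refine ⟨t, ht, .of_nat_of_neg ?_ ?_⟩ <;>
  refine .of_nonneg_of_le (fun n => mul_nonneg (hpos _) (Real.exp_pos _).le) (fun n => ?_) hsum <;>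
  simp only [Int.cast_natCast, Int.cast_neg, abs_neg, Nat.abs_cast]
  · exact mul_le_mul_of_nonneg_right (le_max_left _ _) (Real.exp_pos _).le
  · exact mul_le_mul_of_nonneg_right (le_max_right _ _) (Real.exp_pos _).le

end IsRandomWalk

lemma charFun_eq_tsum_cos {a : ℤ → ℝ} (hsa : Summable a) (hsym : ∀ n, a n = a (-n)) (x : ℝ) :
    charFun a x = ∑' k : ℤ, (a k : ℂ) * cos (k * x) := by
  have hsummable (s : ℝ) : Summable fun k : ℤ => (a k : ℂ) * exp (s * k * x * I) :=
    .of_norm_bounded hsa.norm fun k => by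
      have h := norm_exp_ofReal_mul_I (s * k * x)
      push_cast at h
      rw [norm_mul, norm_real, h, mul_one]
  have hpos : charFun a x = ∑' k : ℤ, (a k : ℂ) * exp ((1 : ℝ) * k * x * I) := by
    simp only [charFun, ofReal_one, one_mul, mul_comm I, mul_assoc]
  have hneg : charFun a x = ∑' k : ℤ, (a k : ℂ) * exp ((-1 : ℝ) * k * x * I) := by
    rw [hpos, ← (Equiv.neg ℤ).tsum_eq]
    congr! 2 with k
    simp [hsym k]
  calc charFun a x = (charFun a x + charFun a x) / 2 := by ring
    _ = ∑' k : ℤ, ((a k : ℂ) * exp ((1 : ℝ) * k * x * I) +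
          (a k : ℂ) * exp ((-1 : ℝ) * k * x * I)) / 2 := by
      nth_rw 1 [hpos, hneg]
      rw [tsum_div_const, (hsummable 1).tsum_add (hsummable (-1))]
    _ = ∑' k : ℤ, (a k : ℂ) * cos (k * x) := tsum_congr fun k => by
      rw [cos]
      push_cast
      ring_nf

noncomputable def charFunSqrt (a : ℤ → ℝ) (z : ℂ) : ℂ :=
  ∑' k : ℤ, (a k : ℂ) * cosSqrt (k ^ 2 * z)

lemma charFun_eq_charFunSqrt_sq {a : ℤ → ℝ} (hsa : Summable a) (hsym : ∀ n, a n = a (-n))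
    (x : ℝ) : charFun a x = charFunSqrt a (x ^ 2) := by
  simp_rw [charFun_eq_tsum_cos hsa hsym, charFunSqrt, ← mul_pow, cosSqrt_sq]

lemma charFunSqrt_zero (a : ℤ → ℝ) : charFunSqrt a 0 = ((∑' k, a k : ℝ) : ℂ) := by
  simp [charFunSqrt, cosSqrt_zero, ofReal_tsum]

section ExponentialMoment

variable {a : ℤ → ℝ} (hpos : ∀ k, 0 ≤ a k) {t : ℝ}
  (hmom : Summable fun k : ℤ => a k * Real.exp (t * |(k : ℝ)|))
include hpos

lemma norm_mul_cosSqrt_le (ht : 0 ≤ t) (k : ℤ) {z : ℂ} (hz : z ∈ Metric.ball 0 (t ^ 2)) :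
    ‖(a k : ℂ) * cosSqrt (k ^ 2 * z)‖ ≤ a k * Real.exp (t * |(k : ℝ)|) := by
  have hkz : ‖(k : ℂ) ^ 2 * z‖ ≤ (t * |(k : ℝ)|) ^ 2 := by
    rw [norm_mul, norm_pow, norm_intCast, mul_pow, mul_comm]
    gcongr
    exact (mem_ball_zero_iff.1 hz).le
  rw [norm_mul, norm_real, Real.norm_of_nonneg (hpos k)]
  refine mul_le_mul_of_nonneg_left ?_ (hpos k)
  calc ‖cosSqrt (k ^ 2 * z)‖ ≤ Real.cosh (t * |(k : ℝ)|) := norm_cosSqrt_le hkz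
    _ ≤ Real.exp (t * |(k : ℝ)|) := by
      simpa [abs_of_nonneg ht] using Real.cosh_le_exp_abs (t * |(k : ℝ)|)

include hmom

lemma analyticOnNhd_charFunSqrt (ht : 0 ≤ t) :
    AnalyticOnNhd ℂ (charFunSqrt a) (Metric.ball 0 (t ^ 2)) :=
  (differentiableOn_tsum_of_summable_norm hmom (fun k => by fun_prop) Metric.isOpen_ball
    (norm_mul_cosSqrt_le hpos ht)).analyticOnNhd Metric.isOpen_ball

lemma hasSum_deriv_charFunSqrt_zero (ht : 0 < t) :
    HasSum (fun k : ℤ => ((-(1 / 2) * ((k : ℝ) ^ 2 * a k) : ℝ) : ℂ)) (deriv (charFunSqrt a) 0) := by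
  refine (hasSum_deriv_of_summable_norm hmom (fun k => by fun_prop) Metric.isOpen_ball
    (norm_mul_cosSqrt_le hpos ht.le) (Metric.mem_ball_self (by positivity))).congr_fun fun k => ?_
  have h : HasDerivAt (fun w => (a k : ℂ) * cosSqrt (k ^ 2 * w)) (a k * (-1 / 2 * (k ^ 2 * 1))) 0 :=
    (hasDerivAt_cosSqrt_zero.comp_of_eq 0 ((hasDerivAt_id (0 : ℂ)).const_mul _)
      (mul_zero _).symm).const_mul _
  rw [h.deriv]
  push_cast
  ring

end ExponentialMoment

/-- The characteristic function of a symmetric random walk (nondegenerate at `0`)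
can be written as `f(x) = h(x^2)` for `h` analytic near `0` in `ℂ`, with
`h(0) = 1` and `h'(0) = -(1/2) ∑ k^2 a(k) < 0`. -/
theorem charFun_eq_h_of_sq (a : ℤ → ℝ) (ha : IsRandomWalk a)
    (hsym : ∀ n : ℤ, a n = a (-n)) (hnz : ∃ n : ℤ, n ≠ 0 ∧ a n ≠ 0) :
    ∃ h : ℂ → ℂ, ∃ U : Set ℂ, IsOpen U ∧ (0 : ℂ) ∈ U ∧ AnalyticOnNhd ℂ h U ∧
      (∃ ε : ℝ, 0 < ε ∧ ∀ x : ℝ, |x| < ε → charFun a x = h ((x : ℂ) ^ 2)) ∧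
      h 0 = 1 ∧
      deriv h 0 = ((-(1 / 2) * ∑' k : ℤ, (k : ℝ) ^ 2 * a k : ℝ) : ℂ) ∧
      (-(1 / 2) * ∑' k : ℤ, (k : ℝ) ^ 2 * a k : ℝ) < 0 := by
  obtain ⟨t, ht, hmom⟩ := ha.exists_summable_mul_exp_abs
  have hderiv := hasSum_deriv_charFunSqrt_zero ha.1 hmom ht
  have hsecond : Summable fun k : ℤ => (k : ℝ) ^ 2 * a k :=
    (summable_mul_left_iff (by norm_num)).1 (Complex.summable_ofReal.1 hderiv.summable)
  obtain ⟨n, hn, han⟩ := hnz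
  have hsecond_pos : 0 < ∑' k : ℤ, (k : ℝ) ^ 2 * a k :=
    hsecond.tsum_pos (fun k => mul_nonneg (sq_nonneg _) (ha.1 k)) n
      (mul_pos (sq_pos_of_ne_zero (Int.cast_ne_zero.2 hn)) ((ha.1 n).lt_of_ne' han))
  refine ⟨charFunSqrt a, Metric.ball 0 (t ^ 2), Metric.isOpen_ball,
    Metric.mem_ball_self (by positivity), analyticOnNhd_charFunSqrt ha.1 hmom ht.le,
    ⟨1, one_pos, fun x _ => charFun_eq_charFunSqrt_sq ha.summable hsym x⟩, ?_, ?_, by linarith⟩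
  · rw [charFunSqrt_zero, ha.2.1, ofReal_one]
  · rw [← hderiv.tsum_eq, ← ofReal_tsum, tsum_mul_left]
end

section
/- Let a and b be symmetric, primitive random walks on ℤ, all of whose step sizes are odd, with the same return probabilities (c_n(a) = c_n(b) for all n ≥ 1). Let f and g be the characteristic functions of a and b respectively. Suppose η ∈ (0,1) and φ_f, φ_g : [1−η, 1] → [0, π/2] are continuous on [1−η, 1], continuously differentiable on (1−η, 1), satisfy φ_f(1) = φ_g(1) = 0, f(φ_f(y)) = y and g(φ_g(y)) = y for all y ∈ [1−η, 1]. Then there exists μ > 0 such that ∫_{1−η}^{1} y^{2n} (φ_f'(y) − φ_g'(y)) dy = o(e^{−2μn}) as n → ∞. -/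
/-!
For a symmetric walk the characteristic function is the real cosine series `f`, and
`∫_{-π}^{π} f ^ n = 2π c_n`. Equal return probabilities therefore give `f` and `g` the same
moments, hence (Weierstrass) the same distribution of values over a period. Near the maximum
value `1`, primitivity makes `{f ≥ y} ∩ (-π, π]` the interval `[-φ_f y, φ_f y]`, so comparing
measures of superlevel sets gives `φ_f = φ_g` on some `(c, 1)`. The integrand then vanishes
there and the integral is `O(c ^ (2n))`.
-/

open Filter Asymptotics

open Real Set

namespace MeasureTheory.Measure

variable {ν ν₁ ν₂ : Measure ℝ} {a b : ℝ}

theorem integrable_of_ae_mem_Icc [IsFiniteMeasure ν] (h : ∀ᵐ x ∂ν, x ∈ Icc a b)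
    {g : ℝ → ℝ} (hg : Continuous g) : Integrable g ν := by
  obtain ⟨C, hC⟩ := isCompact_Icc.exists_bound_of_continuousOn hg.continuousOn
  exact .of_bound hg.aestronglyMeasurable C (h.mono hC)

theorem integral_eval_eq_sum_moments [IsFiniteMeasure ν] (h : ∀ᵐ x ∂ν, x ∈ Icc a b)
    (p : Polynomial ℝ) :
    ∫ x, p.eval x ∂ν =
      ∑ i ∈ Finset.range (p.natDegree + 1), p.coeff i * ∫ x, x ^ i ∂ν := by
  simp_rw [Polynomial.eval_eq_sum_range, ← integral_const_mul]
  exact integral_finsetSum _ fun i _ =>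
    integrable_of_ae_mem_Icc h (continuous_const.mul (continuous_pow i))

/-- By Weierstrass approximation on `[a, b]`, the moments determine the integrals of all bounded
continuous functions. -/
theorem ext_of_forall_integral_pow_eq [IsFiniteMeasure ν₁] [IsFiniteMeasure ν₂]
    (h₁ : ∀ᵐ x ∂ν₁, x ∈ Icc a b) (h₂ : ∀ᵐ x ∂ν₂, x ∈ Icc a b)
    (hmom : ∀ n : ℕ, ∫ x, x ^ n ∂ν₁ = ∫ x, x ^ n ∂ν₂) : ν₁ = ν₂ := by
  refine ext_of_forall_integral_eq_of_IsFiniteMeasure fun g =>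
    eq_of_forall_dist_le fun ε hε => ?_
  set C := ν₁.real univ + ν₂.real univ + 1
  have hC : 0 < C := by positivity
  obtain ⟨p, hp⟩ := exists_polynomial_near_of_continuousOn a b g g.continuous.continuousOn
    (ε / C) (by positivity)
  have happrox : ∀ ν : Measure ℝ, [IsFiniteMeasure ν] → (∀ᵐ x ∂ν, x ∈ Icc a b) →
      dist (∫ x, g x ∂ν) (∫ x, p.eval x ∂ν) ≤ ε / C * ν.real univ := fun ν _ h => by
    rw [dist_eq_norm, ← integral_sub (integrable_of_ae_mem_Icc h g.continuous)
      (integrable_of_ae_mem_Icc h p.continuous)]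
    exact norm_integral_le_of_norm_le_const <| h.mono fun x hx => by
      rw [norm_sub_rev]; exact (hp x hx).le
  have hpoly : ∫ x, p.eval x ∂ν₁ = ∫ x, p.eval x ∂ν₂ := by
    simp only [integral_eval_eq_sum_moments h₁, integral_eval_eq_sum_moments h₂, hmom]
  calc dist (∫ x, g x ∂ν₁) (∫ x, g x ∂ν₂)
      ≤ dist (∫ x, g x ∂ν₁) (∫ x, p.eval x ∂ν₁) +
          dist (∫ x, g x ∂ν₂) (∫ x, p.eval x ∂ν₂) := by
        rw [hpoly, dist_comm (∫ x, g x ∂ν₂)]; exact dist_triangle _ _ _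
    _ ≤ ε / C * ν₁.real univ + ε / C * ν₂.real univ :=
        add_le_add (happrox ν₁ h₁) (happrox ν₂ h₂)
    _ ≤ ε / C * C := by rw [← mul_add]; gcongr; linarith
    _ = ε := div_mul_cancel₀ ε hC.ne'

end MeasureTheory.Measure

section PiProduct

variable {ι : Type*}

theorem summable_pi_prod_of_nonneg {c : ι → ℝ} (hc : Summable c) (h0 : 0 ≤ c) (n : ℕ) :
    Summable fun k : Fin n → ι => ∏ i, c (k i) := by
  induction n with
  | zero => exact .of_finite
  | succ n ih =>
    have h := hc.mul_of_nonneg ih h0 fun k => Finset.prod_nonneg fun i _ => h0 _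
    refine ((Fin.consEquiv fun _ => ι).symm.summable_iff.2 h).congr fun k => ?_
    simp [Fin.prod_univ_succ, Fin.consEquiv, Fin.tail]

theorem tsum_pow_eq_tsum_pi_prod {R : Type*} [NormedCommRing R] [NormOneClass R]
    [CompleteSpace R] {c : ι → R} (hc : Summable fun m => ‖c m‖) (n : ℕ) :
    (∑' m, c m) ^ n = ∑' k : Fin n → ι, ∏ i, c (k i) := by
  induction n with
  | zero => simp
  | succ n ih =>
    have hs : Summable fun k : Fin n → ι => ‖∏ i, c (k i)‖ :=
      .of_nonneg_of_le (fun _ => norm_nonneg _) (fun k => Finset.norm_prod_le _ _)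
        (summable_pi_prod_of_nonneg hc (fun _ => norm_nonneg _) n)
    rw [pow_succ, mul_comm, ih, tsum_mul_tsum_of_summable_norm hc hs,
      ← (Fin.consEquiv fun _ => ι).symm.tsum_eq]
    refine tsum_congr fun k => ?_
    simp [Fin.prod_univ_succ, Fin.consEquiv, Fin.tail]

end PiProduct

theorem summable_of_tsum_ne_zero {ι : Type*} {f : ι → ℝ} (h : ∑' i, f i ≠ 0) :
    Summable f :=
  not_not.1 fun hs => h (tsum_eq_zero_of_not_summable hs)

theorem exists_mem_cos_int_mul_ne_one {s : Set ℤ} (hs : AddSubgroup.closure s = ⊤) {x : ℝ}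
    (hx₀ : 0 < x) (hx : x < 2 * π) : ∃ k ∈ s, Real.cos (k * x) ≠ 1 := by
  by_contra! h
  have hle : AddSubgroup.closure s ≤
      (AddSubgroup.zmultiples (2 * π)).comap (zmultiplesHom ℝ x) :=
    (AddSubgroup.closure_le _).2 fun k hk => by
      obtain ⟨n, hn⟩ := (Real.cos_eq_one_iff _).1 (h k hk)
      exact ⟨n, by simpa using hn⟩
  obtain ⟨n, hn⟩ := hle (hs ▸ AddSubgroup.mem_top 1)
  simp only [zmultiplesHom_apply, one_smul, zsmul_eq_mul] at hn
  have hn₀ : (0 : ℝ) < n := by nlinarith [Real.pi_pos]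
  have hn₁ : (n : ℝ) < 1 := by nlinarith [Real.pi_pos]
  norm_cast at hn₀ hn₁
  omega

theorem Function.Odd.tsum_eq_zero {f : ℤ → ℝ} (hf : f.Odd) : ∑' k, f k = 0 := by
  have h := (Equiv.neg ℤ).tsum_eq f
  simp only [Equiv.neg_apply] at h
  rw [tsum_congr hf, tsum_neg] at h
  linarith

section LocalInverse

variable {F φ : ℝ → ℝ} {c : ℝ}

theorem strictAntiOn_of_leftInvOn (hc : c ≤ 1) (hφ : ContinuousOn φ (Icc c 1))
    (hφc : φ 1 ≤ φ c) (hinv : LeftInvOn F φ (Icc c 1)) : StrictAntiOn φ (Icc c 1) :=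
  hφ.strictAntiOn_of_injOn_Icc hc hφc hinv.injOn

/-- On `[0, φ c]`, which `φ` fills by continuity, `F` is the inverse of the decreasing `φ`. -/
theorem le_apply_iff_le_of_leftInvOn (hc : c ≤ 1) (hφ : ContinuousOn φ (Icc c 1))
    (hφ1 : φ 1 = 0) (hinv : LeftInvOn F φ (Icc c 1)) {y t : ℝ} (hy : y ∈ Icc c 1)
    (ht : t ∈ Icc 0 (φ c)) : y ≤ F t ↔ t ≤ φ y := by
  obtain ⟨z, hz, rfl⟩ := intermediate_value_Icc' hc hφ (hφ1 ▸ ht)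
  rw [hinv hz, (strictAntiOn_of_leftInvOn hc hφ (hφ1 ▸ ht.1.trans ht.2) hinv).le_iff_ge hz hy]

theorem exists_preimage_Ici_inter_Ioc_eq_Icc (hF : Continuous F) (heven : F.Even)
    (hlt : ∀ x ∈ Ioc 0 π, F x < 1) (hc : c < 1) (hφ : ContinuousOn φ (Icc c 1))
    (hmaps : MapsTo φ (Icc c 1) (Ico 0 π)) (hφ1 : φ 1 = 0) (hinv : LeftInvOn F φ (Icc c 1)) :
    ∃ c' ∈ Ico c 1, ∀ y ∈ Ioc c' 1, F ⁻¹' Ici y ∩ Ioc (-π) π = Icc (-φ y) (φ y) := by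
  have hcmem : c ∈ Icc c 1 := ⟨le_rfl, hc.le⟩
  have hφc : 0 < φ c := (hmaps hcmem).1.lt_of_ne fun h =>
    hc.ne (hinv.injOn hcmem ⟨hc.le, le_rfl⟩ (h.symm.trans hφ1.symm))
  have hanti := strictAntiOn_of_leftInvOn hc.le hφ (hφ1 ▸ hφc.le) hinv
  obtain ⟨xm, hxm, hmax⟩ := isCompact_Icc.exists_isMaxOn
    (nonempty_Icc.2 (hmaps hcmem).2.le) hF.continuousOn
  have hFxm : F xm < 1 := hlt xm ⟨hφc.trans_le hxm.1, hxm.2⟩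
  refine ⟨max (F xm) c, ⟨le_max_right _ _, max_lt hFxm hc⟩, fun y hy => ?_⟩
  have hymem : y ∈ Icc c 1 := ⟨(le_max_right _ _).trans hy.1.le, hy.2⟩
  have hφy : φ y ≤ φ c := hanti.antitoneOn hcmem hymem hymem.1
  have hFabs : ∀ x, F |x| = F x := fun x => by
    rcases abs_choice x with h | h <;> simp [h, heven x]
  ext x
  simp only [mem_inter_iff, mem_preimage, mem_Ici, mem_Ioc, mem_Icc, ← abs_le, ← hFabs x]
  constructor
  · rintro ⟨hyx, hx₁, hx₂⟩
    have hxc : |x| ≤ φ c := by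
      by_contra! h
      have : F |x| ≤ F xm := hmax ⟨h.le, abs_le.2 ⟨hx₁.le, hx₂⟩⟩
      linarith [le_max_left (F xm) c, hy.1]
    exact (le_apply_iff_le_of_leftInvOn hc.le hφ hφ1 hinv hymem ⟨abs_nonneg x, hxc⟩).1 hyx
  · intro hx
    have hxπ : |x| < π := hx.trans_lt (hmaps hymem).2
    exact ⟨(le_apply_iff_le_of_leftInvOn hc.le hφ hφ1 hinv hymem
      ⟨abs_nonneg x, hx.trans hφy⟩).2 hx, (abs_lt.1 hxπ).1, (abs_lt.1 hxπ).2.le⟩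

end LocalInverse

section Decay

open MeasureTheory intervalIntegral

variable {f : ℝ → ℝ} {a c : ℝ}

theorem norm_integral_pow_mul_le (ha : 0 < a) (hac : a ≤ c) (n : ℕ) :
    ‖∫ y in a..c, y ^ n * f y‖ ≤ c ^ n * ∫ y in a..c, |f y| := by
  have hpos : ∀ y ∈ uIcc a c, 0 < y := fun y hy => ha.trans_le (uIcc_of_le hac ▸ hy).1
  by_cases hf : IntervalIntegrable f volume a c
  · rw [← intervalIntegral.integral_const_mul]
    refine norm_integral_le_of_norm_le hac (ae_of_all _ fun y hy => ?_) (hf.abs.const_mul _)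
    rw [norm_mul, Real.norm_eq_abs, Real.norm_eq_abs, abs_pow, abs_of_pos (ha.trans hy.1)]
    exact mul_le_mul_of_nonneg_right (pow_le_pow_left₀ (ha.trans hy.1).le hy.2 n) (abs_nonneg _)
  · -- junk value: dividing by `y ^ n` shows `y ^ n * f y` is not integrable either
    have hinv : ContinuousOn (fun y : ℝ => (y ^ n)⁻¹) (uIcc a c) :=
      (continuousOn_pow n).inv₀ fun y hy => pow_ne_zero n (hpos y hy).ne'
    have hnot : ¬IntervalIntegrable (fun y => y ^ n * f y) volume a c := fun h =>
      hf <| (h.continuousOn_mul hinv).congr fun y hy => by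
        field_simp [(hpos y (uIoc_subset_uIcc hy)).ne']
    rw [integral_undef hnot, norm_zero]
    exact mul_nonneg (pow_nonneg (ha.le.trans hac) n)
      (integral_nonneg hac fun y _ => abs_nonneg _)

theorem integral_eq_integral_of_eqOn_zero {b : ℝ} (hac : a ≤ c) (hcb : c ≤ b)
    (hf : ∀ y ∈ Ioo c b, f y = 0) : ∫ y in a..b, f y = ∫ y in a..c, f y := by
  rw [integral_of_le (hac.trans hcb), integral_of_le hac]
  refine setIntegral_eq_of_subset_of_ae_sdiff_eq_zero measurableSet_Ioc.nullMeasurableSet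
    (Ioc_subset_Ioc_right hcb) ?_
  filter_upwards [Measure.ae_ne volume b] with y hyb hy
  exact hf y ⟨(not_le.1 fun h => hy.2 ⟨hy.1.1, h⟩), hy.1.2.lt_of_ne hyb⟩

theorem exists_isLittleO_integral_pow_mul_of_eqOn_zero (ha : 0 < a) (hac : a ≤ c) (hc : c < 1)
    (hf : ∀ y ∈ Ioo c 1, f y = 0) :
    ∃ μ : ℝ, 0 < μ ∧ (fun n : ℕ => ∫ y in a..1, y ^ (2 * n) * f y)
      =o[atTop] fun n : ℕ => Real.exp (-(2 * μ) * n) := by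
  have hc₀ : 0 < c := ha.trans_le hac
  refine ⟨-Real.log c / 2, by linarith [Real.log_neg hc₀ hc], ?_⟩
  have hexp : ∀ n : ℕ, Real.exp (-(2 * (-Real.log c / 2)) * n) = c ^ n := fun n => by
    rw [show -(2 * (-Real.log c / 2)) * n = n * Real.log c by ring, Real.exp_nat_mul,
      Real.exp_log hc₀]
  simp_rw [hexp]
  refine IsBigO.trans_isLittleO (g := fun n : ℕ => (c ^ 2) ^ n) ?_
    (isLittleO_pow_pow_of_lt_left (sq_nonneg c) (by nlinarith))
  refine IsBigO.of_bound (∫ y in a..c, |f y|) (Eventually.of_forall fun n => ?_)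
  rw [integral_eq_integral_of_eqOn_zero hac hc.le fun y hy => by simp [hf y hy], ← pow_mul,
    Real.norm_of_nonneg (pow_nonneg hc₀.le _), mul_comm (∫ y in a..c, |f y|)]
  exact norm_integral_pow_mul_le ha hac _

end Decay

section Moments

open Complex

variable {a : ℤ → ℝ}

theorem norm_exp_I_int_mul (m : ℤ) (x : ℝ) : ‖exp (I * m * x)‖ = 1 := by
  rw [show I * m * x = ((m * x : ℝ) : ℂ) * I by push_cast; ring, norm_exp_ofReal_mul_I]

theorem charFun_pow (ha : Summable a) (x : ℝ) (n : ℕ) :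
    charFun a x ^ n =
      ∑' k : Fin n → ℤ, ((∏ i, a (k i) : ℝ) : ℂ) * exp (I * (∑ i, k i : ℤ) * x) := by
  have hnorm : Summable fun k : ℤ => ‖(a k : ℂ) * exp (I * k * x)‖ := by
    simpa [norm_exp_I_int_mul] using summable_norm_iff.2 ha
  rw [charFun, tsum_pow_eq_tsum_pi_prod hnorm]
  refine tsum_congr fun k => ?_
  rw [Finset.prod_mul_distrib, ← Complex.exp_sum]
  push_cast
  simp only [Finset.mul_sum, Finset.sum_mul]

theorem integral_exp_I_int_mul (m : ℤ) :
    ∫ x in -π..π, exp (I * m * x) = if m = 0 then ((2 * π : ℝ) : ℂ) else 0 := by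
  split_ifs with hm
  · simp [hm]; ring
  · have hc : I * m ≠ 0 := by simp [I_ne_zero, hm]
    rw [integral_exp_mul_complex hc, div_eq_zero_iff, sub_eq_zero]
    left
    have h2π : I * m * (π : ℂ) = I * m * ((-π : ℝ) : ℂ) + m * (2 * π * I) := by push_cast; ring
    rw [h2π, Complex.exp_add, exp_int_mul_two_pi_mul_I, mul_one]

/-- Expanding `charFun a ^ n` as a sum over `n`-step paths, orthogonality of the exponentials
keeps exactly the paths returning to `0`. -/
theorem integral_charFun_pow (ha : Summable a) (n : ℕ) :
    ∫ x in -π..π, charFun a x ^ n = ((2 * π * returnProb a n : ℝ) : ℂ) := by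
  set e : (Fin n → ℤ) → ℝ → ℂ :=
    fun k x => ((∏ i, a (k i) : ℝ) : ℂ) * exp (I * (∑ i, k i : ℤ) * x)
  have hcont : ∀ k, Continuous (e k) := fun k => by fun_prop
  have hnorm : ∀ k x, ‖e k x‖ = ∏ i, |a (k i)| := fun k x => by
    simp only [e, norm_mul, norm_exp_I_int_mul, mul_one, norm_real, Real.norm_eq_abs,
      Finset.abs_prod]
  have hsum : Summable fun k => ∫ x in Ioc (-π) π, ‖e k x‖ := by
    simp only [hnorm, MeasureTheory.integral_const, smul_eq_mul]
    exact (summable_pi_prod_of_nonneg (summable_abs_iff.2 ha) (fun _ => abs_nonneg _) n).mul_left _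
  have hterm : ∀ k, ∫ x in Ioc (-π) π, e k x
      = ((2 * π : ℝ) : ℂ) * ((if ∑ i, k i = 0 then ∏ i, a (k i) else 0 : ℝ) : ℂ) := fun k => by
    rw [← intervalIntegral.integral_of_le (by linarith [Real.pi_pos]),
      intervalIntegral.integral_const_mul, integral_exp_I_int_mul]
    split_ifs <;> push_cast <;> ring
  rw [intervalIntegral.integral_of_le (by linarith [Real.pi_pos])]
  simp_rw [charFun_pow ha]
  rw [← MeasureTheory.integral_tsum_of_summable_integral_norm
    (fun k => (hcont k).integrableOn_Ioc) hsum, tsum_congr hterm, tsum_mul_left,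
    ← ofReal_tsum, returnProb]
  push_cast
  ring

end Moments

/-- The characteristic function of a symmetric walk, as a real cosine series. -/
noncomputable def cosSeries (a : ℤ → ℝ) (x : ℝ) : ℝ := ∑' k : ℤ, a k * Real.cos (k * x)

section CosSeries

variable {a : ℤ → ℝ}

theorem summable_mul_cos (ha : Summable a) (x : ℝ) :
    Summable fun k : ℤ => a k * Real.cos (k * x) :=
  .of_norm_bounded (summable_abs_iff.2 ha) fun k => by
    simpa [abs_mul] using mul_le_of_le_one_right (abs_nonneg _) (Real.abs_cos_le_one _)

theorem summable_mul_sin (ha : Summable a) (x : ℝ) :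
    Summable fun k : ℤ => a k * Real.sin (k * x) :=
  .of_norm_bounded (summable_abs_iff.2 ha) fun k => by
    simpa [abs_mul] using mul_le_of_le_one_right (abs_nonneg _) (Real.abs_sin_le_one _)

theorem charFun_eq_cosSeries (ha : Summable a) (hsym : ∀ n, a n = a (-n)) (x : ℝ) :
    charFun a x = cosSeries a x := by
  have hsin : ∑' k : ℤ, a k * Real.sin (k * x) = 0 :=
    Function.Odd.tsum_eq_zero fun k => by simp [← hsym, neg_mul, Real.sin_neg]
  have hterm : ∀ k : ℤ, (a k : ℂ) * Complex.exp (Complex.I * k * x) =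
      ((a k * Real.cos (k * x) : ℝ) : ℂ) + ((a k * Real.sin (k * x) : ℝ) : ℂ) * Complex.I := by
    intro k
    rw [show Complex.I * k * x = ((k * x : ℝ) : ℂ) * Complex.I by push_cast; ring,
      Complex.exp_mul_I]
    push_cast
    ring
  rw [charFun, tsum_congr hterm,
    Summable.tsum_add (Complex.summable_ofReal.2 (summable_mul_cos ha x))
      ((Complex.summable_ofReal.2 (summable_mul_sin ha x)).mul_right _),
    tsum_mul_right, ← Complex.ofReal_tsum, ← Complex.ofReal_tsum, hsin, cosSeries]
  simp

theorem continuous_cosSeries (ha : Summable a) : Continuous (cosSeries a) :=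
  continuous_tsum (fun k => by fun_prop) (summable_abs_iff.2 ha) fun k x => by
    simpa [abs_mul] using mul_le_of_le_one_right (abs_nonneg _) (Real.abs_cos_le_one _)

theorem cosSeries_neg (a : ℤ → ℝ) (x : ℝ) : cosSeries a (-x) = cosSeries a x := by
  simp only [cosSeries, mul_neg, Real.cos_neg]

theorem abs_cosSeries_le (h0 : 0 ≤ a) (ha : Summable a) (x : ℝ) :
    |cosSeries a x| ≤ ∑' k, a k := by
  refine (norm_tsum_le_tsum_norm (summable_mul_cos ha x).norm).trans
    (Summable.tsum_le_tsum (fun k => ?_) (summable_mul_cos ha x).norm ha)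
  simpa [abs_mul, abs_of_nonneg (h0 k)] using
    mul_le_of_le_one_right (h0 k) (Real.abs_cos_le_one _)

theorem cosSeries_lt_tsum (h0 : 0 ≤ a) (ha : Summable a)
    (hp : AddSubgroup.closure {n : ℤ | a n ≠ 0} = ⊤) {x : ℝ} (hx₀ : 0 < x) (hx : x < 2 * π) :
    cosSeries a x < ∑' k, a k := by
  obtain ⟨k, hk, hcos⟩ := exists_mem_cos_int_mul_ne_one hp hx₀ hx
  refine Summable.tsum_lt_tsum (i := k) (fun j => mul_le_of_le_one_right (h0 j) (Real.cos_le_one _))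
    ?_ (summable_mul_cos ha x) ha
  exact mul_lt_of_lt_one_right ((h0 k).lt_of_ne' hk) ((Real.cos_le_one _).lt_of_ne hcos)

end CosSeries

theorem returnProb_zero (a : ℤ → ℝ) : returnProb a 0 = 1 := by
  simp [returnProb]

theorem integral_cosSeries_pow {a : ℤ → ℝ} (ha : Summable a) (hsym : ∀ n, a n = a (-n)) (n : ℕ) :
    ∫ x in -π..π, cosSeries a x ^ n = 2 * π * returnProb a n := by
  have h := integral_charFun_pow ha n
  simp_rw [charFun_eq_cosSeries ha hsym, ← Complex.ofReal_pow,
    intervalIntegral.integral_ofReal] at h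
  exact_mod_cast h

section ValueDistribution

open MeasureTheory

noncomputable def valueDistribution (F : ℝ → ℝ) : Measure ℝ :=
  (volume.restrict (Ioc (-π) π)).map F

variable {F : ℝ → ℝ}

instance : IsFiniteMeasure (valueDistribution F) := by
  unfold valueDistribution; infer_instance

theorem integral_valueDistribution (hF : Continuous F) {g : ℝ → ℝ} (hg : Continuous g) :
    ∫ y, g y ∂valueDistribution F = ∫ x in -π..π, g (F x) := by
  rw [valueDistribution, integral_map hF.aemeasurable hg.aestronglyMeasurable,
    intervalIntegral.integral_of_le (by linarith [Real.pi_pos])]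

theorem ae_valueDistribution_mem {s : Set ℝ} (hF : Continuous F) (hs : MeasurableSet s)
    (hFs : ∀ x, F x ∈ s) : ∀ᵐ y ∂valueDistribution F, y ∈ s :=
  (ae_map_iff hF.aemeasurable hs).2 (ae_of_all _ hFs)

theorem valueDistribution_Ici (hF : Continuous F) (y : ℝ) :
    valueDistribution F (Ici y) = volume (F ⁻¹' Ici y ∩ Ioc (-π) π) := by
  rw [valueDistribution, Measure.map_apply hF.measurable measurableSet_Ici,
    Measure.restrict_apply (hF.measurable measurableSet_Ici)]

/-- The moments of the value distribution of the cosine series are the return probabilities. -/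
theorem valueDistribution_cosSeries_eq {a b : ℤ → ℝ} (ha₀ : 0 ≤ a) (hb₀ : 0 ≤ b)
    (ha₁ : ∑' k, a k = 1) (hb₁ : ∑' k, b k = 1) (hsa : ∀ n, a n = a (-n))
    (hsb : ∀ n, b n = b (-n)) (hret : ∀ n : ℕ, 1 ≤ n → returnProb a n = returnProb b n) :
    valueDistribution (cosSeries a) = valueDistribution (cosSeries b) := by
  have ha := summable_of_tsum_ne_zero (ha₁ ▸ one_ne_zero)
  have hb := summable_of_tsum_ne_zero (hb₁ ▸ one_ne_zero)
  have hmem : ∀ {w : ℤ → ℝ}, 0 ≤ w → ∑' k, w k = 1 → Summable w →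
      ∀ᵐ y ∂valueDistribution (cosSeries w), y ∈ Icc (-1) 1 := fun h₀ h₁ hs =>
    ae_valueDistribution_mem (continuous_cosSeries hs) measurableSet_Icc fun x =>
      abs_le.1 (h₁ ▸ abs_cosSeries_le h₀ hs x)
  refine Measure.ext_of_forall_integral_pow_eq (hmem ha₀ ha₁ ha) (hmem hb₀ hb₁ hb) fun n => ?_
  rw [integral_valueDistribution (continuous_cosSeries ha) (continuous_pow n),
    integral_valueDistribution (continuous_cosSeries hb) (continuous_pow n),
    integral_cosSeries_pow ha hsa, integral_cosSeries_pow hb hsb]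
  rcases n with _ | n
  · simp only [returnProb_zero]
  · rw [hret _ n.succ_pos]

end ValueDistribution

theorem exists_valueDistribution_cosSeries_Ici {a : ℤ → ℝ} {φ : ℝ → ℝ} {c : ℝ} (ha₀ : 0 ≤ a)
    (ha₁ : ∑' k, a k = 1) (hsym : ∀ n, a n = a (-n))
    (hp : AddSubgroup.closure {n : ℤ | a n ≠ 0} = ⊤) (hc : c < 1)
    (hφ : ContinuousOn φ (Icc c 1)) (hmaps : MapsTo φ (Icc c 1) (Ico 0 π)) (hφ1 : φ 1 = 0)
    (hinv : ∀ y ∈ Icc c 1, charFun a (φ y) = y) :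
    ∃ c' ∈ Ico c 1, ∀ y ∈ Ioc c' 1,
      valueDistribution (cosSeries a) (Ici y) = ENNReal.ofReal (2 * φ y) := by
  have ha := summable_of_tsum_ne_zero (ha₁ ▸ one_ne_zero)
  have hF := continuous_cosSeries ha
  have hlt : ∀ x ∈ Ioc 0 π, cosSeries a x < 1 := fun x hx =>
    ha₁ ▸ cosSeries_lt_tsum ha₀ ha hp hx.1 (by linarith [hx.2, Real.pi_pos])
  have hinv' : LeftInvOn (cosSeries a) φ (Icc c 1) := fun y hy => by
    exact_mod_cast (charFun_eq_cosSeries ha hsym _).symm.trans (hinv y hy)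
  obtain ⟨c', hc', hlevel⟩ := exists_preimage_Ici_inter_Ioc_eq_Icc hF (cosSeries_neg a) hlt hc hφ
    hmaps hφ1 hinv'
  refine ⟨c', hc', fun y hy => ?_⟩
  rw [valueDistribution_Ici hF, hlevel y hy, Real.volume_Icc, sub_neg_eq_add, two_mul]

theorem moment_difference_estimate_type2_general (a b : ℤ → ℝ)
    (ha : IsRandomWalk a) (hb : IsRandomWalk b)
    (hsa : ∀ n : ℤ, a n = a (-n)) (hsb : ∀ n : ℤ, b n = b (-n))
    (hpa : AddSubgroup.closure {n : ℤ | a n ≠ 0} = ⊤)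
    (hpb : AddSubgroup.closure {n : ℤ | b n ≠ 0} = ⊤)
    (hret : ∀ n : ℕ, 1 ≤ n → returnProb a n = returnProb b n)
    (η : ℝ) (hη : η ∈ Set.Ioo (0 : ℝ) 1) (φf φg : ℝ → ℝ)
    (hmapsf : ∀ y ∈ Set.Icc (1 - η) 1, φf y ∈ Set.Icc 0 (Real.pi / 2))
    (hmapsg : ∀ y ∈ Set.Icc (1 - η) 1, φg y ∈ Set.Icc 0 (Real.pi / 2))
    (hcontf : ContinuousOn φf (Set.Icc (1 - η) 1))
    (hcontg : ContinuousOn φg (Set.Icc (1 - η) 1))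
    (honef : φf 1 = 0) (honeg : φg 1 = 0)
    (hinvf : ∀ y ∈ Set.Icc (1 - η) 1, charFun a (φf y) = (y : ℂ))
    (hinvg : ∀ y ∈ Set.Icc (1 - η) 1, charFun b (φg y) = (y : ℂ)) :
    ∃ μ : ℝ, 0 < μ ∧
      (fun n : ℕ => ∫ y in (1 - η)..1, y ^ (2 * n) * (deriv φf y - deriv φg y))
        =o[Filter.atTop] fun n : ℕ => Real.exp (-(2 * μ) * n) := by
  obtain ⟨ha₀, ha₁, -⟩ := ha
  obtain ⟨hb₀, hb₁, -⟩ := hb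
  have hdist := valueDistribution_cosSeries_eq ha₀ hb₀ ha₁ hb₁ hsa hsb hret
  have hc : 1 - η < 1 := by linarith [hη.1]
  have hπ : Icc (0 : ℝ) (π / 2) ⊆ Ico 0 π := Icc_subset_Ico_right (by linarith [Real.pi_pos])
  obtain ⟨cf, hcf, hf⟩ := exists_valueDistribution_cosSeries_Ici ha₀ ha₁ hsa hpa hc hcontf
    (fun y hy => hπ (hmapsf y hy)) honef hinvf
  obtain ⟨cg, hcg, hg⟩ := exists_valueDistribution_cosSeries_Ici hb₀ hb₁ hsb hpb hc hcontg
    (fun y hy => hπ (hmapsg y hy)) honeg hinvg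
  have heq : EqOn φf φg (Ioo (max cf cg) 1) := fun y hy => by
    have hy' : y ∈ Icc (1 - η) 1 := ⟨hcf.1.trans ((le_max_left _ _).trans hy.1.le), hy.2.le⟩
    have h := hf y ⟨(le_max_left _ _).trans_lt hy.1, hy.2.le⟩
    rw [hdist, hg y ⟨(le_max_right _ _).trans_lt hy.1, hy.2.le⟩,
      ENNReal.ofReal_eq_ofReal_iff (by linarith [(hmapsg y hy').1])
        (by linarith [(hmapsf y hy').1])] at h
    linarith
  refine exists_isLittleO_integral_pow_mul_of_eqOn_zero (by linarith [hη.2])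
    (hcf.1.trans (le_max_left _ _)) (max_lt hcf.2 hcg.2) fun y hy => sub_eq_zero.2 ?_
  exact (Filter.eventuallyEq_of_mem (isOpen_Ioo.mem_nhds hy) heq).deriv_eq

/-- For two Type 2 walks (symmetric, primitive, with all step sizes odd) having the
same return probabilities, the even moments of the difference of the derivatives of
the local inverses decay exponentially. -/
theorem moment_difference_estimate_type2 (a b : ℤ → ℝ)
    (ha : IsRandomWalk a) (hb : IsRandomWalk b)
    (hsa : ∀ n : ℤ, a n = a (-n)) (hsb : ∀ n : ℤ, b n = b (-n))
    (hpa : AddSubgroup.closure {n : ℤ | a n ≠ 0} = ⊤)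
    (hpb : AddSubgroup.closure {n : ℤ | b n ≠ 0} = ⊤)
    (hodda : ∀ n : ℤ, a n ≠ 0 → Odd n) (hoddb : ∀ n : ℤ, b n ≠ 0 → Odd n)
    (hret : ∀ n : ℕ, 1 ≤ n → returnProb a n = returnProb b n)
    (η : ℝ) (hη : η ∈ Set.Ioo (0 : ℝ) 1) (φf φg : ℝ → ℝ)
    (hmapsf : ∀ y ∈ Set.Icc (1 - η) 1, φf y ∈ Set.Icc 0 (Real.pi / 2))
    (hmapsg : ∀ y ∈ Set.Icc (1 - η) 1, φg y ∈ Set.Icc 0 (Real.pi / 2))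
    (hcontf : ContinuousOn φf (Set.Icc (1 - η) 1))
    (hcontg : ContinuousOn φg (Set.Icc (1 - η) 1))
    (hdifff : ∀ y ∈ Set.Ioo (1 - η) 1, DifferentiableAt ℝ φf y)
    (hdiffg : ∀ y ∈ Set.Ioo (1 - η) 1, DifferentiableAt ℝ φg y)
    (hderiv_contf : ContinuousOn (deriv φf) (Set.Ioo (1 - η) 1))
    (hderiv_contg : ContinuousOn (deriv φg) (Set.Ioo (1 - η) 1))
    (honef : φf 1 = 0) (honeg : φg 1 = 0)
    (hinvf : ∀ y ∈ Set.Icc (1 - η) 1, charFun a (φf y) = (y : ℂ))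
    (hinvg : ∀ y ∈ Set.Icc (1 - η) 1, charFun b (φg y) = (y : ℂ)) :
    ∃ μ : ℝ, 0 < μ ∧
      (fun n : ℕ => ∫ y in (1 - η)..1, y ^ (2 * n) * (deriv φf y - deriv φg y))
        =o[Filter.atTop] fun n : ℕ => Real.exp (-(2 * μ) * n) :=
  moment_difference_estimate_type2_general a b ha hb hsa hsb hpa hpb hret η hη φf φg hmapsf hmapsg
    hcontf hcontg honef honeg hinvf hinvg
end

section
/- Let a be a symmetric random walk on ℤ with return probabilities c_n. Then limsup_{n→∞} (c_{2n})^{1/(2n)} = 1. -/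
open Filter Asymptotics

/-!
Let `m_N = ∑_{|x| ≤ N} a x`. The `n`-step walks with steps in `[-N, N]` carry mass `m_N ^ n` and
end in `[-N n, N n]`, so some endpoint `k` has `n`-step probability `p ≥ m_N ^ n / (2 N n + 1)`.
By symmetry so has `-k`, and concatenating gives `c_{2n} ≥ p ^ 2`, whence
`c_{2n} ^ (1/(2n)) ≥ m_N / (2 N n + 1) ^ (1/n) → m_N`. As `m_N → 1` and `c_{2n} ≤ 1`, in fact
`c_{2n} ^ (1/(2n)) → 1`.
-/

open Topology Finset

variable {α G : Type*}

theorem HasSum.fin_prod_pow {a : α → ℝ} {s : ℝ} (ha : HasSum a s) (h0 : 0 ≤ a) (n : ℕ) :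
    HasSum (fun v : Fin n → α => ∏ i, a (v i)) (s ^ n) := by
  induction n with
  | zero => simp
  | succ n ih =>
    set g : (Fin n → α) → ℝ := fun v => ∏ i, a (v i)
    have hg : 0 ≤ g := fun v => prod_nonneg fun i _ => h0 _
    have hprod := ha.mul ih (ha.summable.mul_of_nonneg ih.summable h0 hg)
    rw [pow_succ']
    refine (Fin.consEquiv fun _ => α).hasSum_iff.1 ?_
    simpa [g, Function.comp_def, Fin.prod_univ_succ] using hprod

/-- The law of the walk after `n` steps; `returnProb a n = walkDist a n 0` holds by `rfl`. -/
noncomputable def walkDist [AddCommMonoid G] [DecidableEq G] (a : G → ℝ) (n : ℕ) (k : G) : ℝ :=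
  ∑' v : Fin n → G, if ∑ i, v i = k then ∏ i, a (v i) else 0

section walkDist

variable [AddCommMonoid G] [DecidableEq G] {a : G → ℝ}

theorem walkDist_summand_nonneg (h0 : 0 ≤ a) {n : ℕ} (k : G) (v : Fin n → G) :
    0 ≤ if ∑ i, v i = k then ∏ i, a (v i) else 0 := by
  split_ifs
  · exact prod_nonneg fun i _ => h0 _
  · exact le_rfl

theorem walkDist_summand_le (h0 : 0 ≤ a) {n : ℕ} (k : G) (v : Fin n → G) :
    (if ∑ i, v i = k then ∏ i, a (v i) else 0) ≤ ∏ i, a (v i) := by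
  split_ifs
  · exact le_rfl
  · exact prod_nonneg fun i _ => h0 _

theorem summable_walkDist_summand (h0 : 0 ≤ a) (ha : Summable a) (n : ℕ) (k : G) :
    Summable fun v : Fin n → G => if ∑ i, v i = k then ∏ i, a (v i) else 0 :=
  (ha.hasSum.fin_prod_pow h0 n).summable.of_nonneg_of_le
    (walkDist_summand_nonneg h0 k) (walkDist_summand_le h0 k)

theorem walkDist_nonneg (h0 : 0 ≤ a) (n : ℕ) (k : G) : 0 ≤ walkDist a n k :=
  tsum_nonneg (walkDist_summand_nonneg h0 k)

theorem walkDist_le_pow {s : ℝ} (h0 : 0 ≤ a) (ha : HasSum a s) (n : ℕ) (k : G) :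
    walkDist a n k ≤ s ^ n :=
  hasSum_le (walkDist_summand_le h0 k) (summable_walkDist_summand h0 ha.summable n k).hasSum
    (ha.fin_prod_pow h0 n)

/-- `Fin.appendEquiv` sends pairs of walks ending at `k` and at `l` to walks ending at
`k + l`. -/
theorem mul_walkDist_le_walkDist_add (h0 : 0 ≤ a) (ha : Summable a) (m n : ℕ) (k l : G) :
    walkDist a m k * walkDist a n l ≤ walkDist a (m + n) (k + l) := by
  have hprod := (summable_walkDist_summand h0 ha m k).hasSum.mul
    (summable_walkDist_summand h0 ha n l).hasSum <|
      (summable_walkDist_summand h0 ha m k).mul_of_nonneg (summable_walkDist_summand h0 ha n l)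
        (walkDist_summand_nonneg h0 k) (walkDist_summand_nonneg h0 l)
  have happend := (Fin.appendEquiv m n).hasSum_iff.2
    (summable_walkDist_summand h0 ha (m + n) (k + l)).hasSum
  refine hasSum_le (fun p => ?_) hprod happend
  simp only [Function.comp_apply, Fin.appendEquiv_apply, Fin.sum_univ_add, Fin.prod_univ_add,
    Fin.append_left, Fin.append_right]
  rw [ite_zero_mul_ite_zero]
  split_ifs with hkl hsum
  · exact le_rfl
  · exact absurd (by rw [hkl.1, hkl.2]) hsum
  · exact mul_nonneg (prod_nonneg fun i _ => h0 _) (prod_nonneg fun i _ => h0 _)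
  · exact le_rfl

theorem sum_filter_sum_eq_le_walkDist (h0 : 0 ≤ a) (ha : Summable a) {n : ℕ}
    (s : Finset (Fin n → G)) (k : G) :
    ∑ v ∈ s with ∑ i, v i = k, ∏ i, a (v i) ≤ walkDist a n k := by
  rw [sum_filter]
  exact (summable_walkDist_summand h0 ha n k).sum_le_tsum s
    fun v _ => walkDist_summand_nonneg h0 k v

/-- Weighted pigeonhole: the walks with steps in `S` carry mass `(∑ x ∈ S, a x) ^ n` and end
in `T`. -/
theorem exists_pow_sum_div_card_le_walkDist (h0 : 0 ≤ a) (ha : Summable a) {S T : Finset G}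
    {n : ℕ} (hT : T.Nonempty) (hST : ∀ v ∈ Fintype.piFinset fun _ : Fin n => S, ∑ i, v i ∈ T) :
    ∃ k, (∑ x ∈ S, a x) ^ n / #T ≤ walkDist a n k := by
  have hmass : #T • ((∑ x ∈ S, a x) ^ n / #T) =
      ∑ v ∈ Fintype.piFinset fun _ : Fin n => S, ∏ i, a (v i) := by
    rw [nsmul_eq_mul, mul_div_cancel₀ _ (by exact_mod_cast hT.card_pos.ne'), ← prod_univ_sum,
      prod_const, card_univ, Fintype.card_fin]
  obtain ⟨k, -, hk⟩ := exists_le_sum_fiber_of_maps_to_of_nsmul_le_sum hST hT hmass.le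
  exact ⟨k, hk.trans (sum_filter_sum_eq_le_walkDist h0 ha _ k)⟩

end walkDist

theorem walkDist_neg [AddCommGroup G] [DecidableEq G] {a : G → ℝ} (hsym : ∀ x, a x = a (-x))
    (n : ℕ) (k : G) : walkDist a n (-k) = walkDist a n k := by
  rw [walkDist, ← (Equiv.neg (Fin n → G)).tsum_eq]
  refine tsum_congr fun v => ?_
  simp [sum_neg_distrib, ← hsym]

theorem exists_pow_sum_Icc_div_le_walkDist {a : ℤ → ℝ} (h0 : 0 ≤ a) (ha : Summable a) (N n : ℕ) :
    ∃ k, (∑ x ∈ Icc (-(N : ℤ)) N, a x) ^ n / (2 * N * n + 1) ≤ walkDist a n k := by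
  have hST : ∀ v ∈ Fintype.piFinset fun _ : Fin n => Icc (-(N : ℤ)) N,
      ∑ i, v i ∈ Icc (-(N * n : ℤ)) (N * n) := by
    intro v hv
    simp only [Fintype.mem_piFinset, mem_Icc] at hv
    have hlo := sum_le_sum fun i (_ : i ∈ univ) => (hv i).1
    have hhi := sum_le_sum fun i (_ : i ∈ univ) => (hv i).2
    simp only [sum_const, card_univ, Fintype.card_fin, nsmul_eq_mul] at hlo hhi
    exact mem_Icc.2 ⟨by linarith, by linarith⟩
  have hcard : (#(Icc (-(N * n : ℤ)) (N * n)) : ℝ) = 2 * N * n + 1 := by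
    have hlen : (N * n + 1 - -(N * n) : ℤ) = ((2 * N * n + 1 : ℕ) : ℤ) := by push_cast; ring
    rw [Int.card_Icc, hlen, Int.toNat_natCast]
    push_cast
    ring
  have hT : (Icc (-(N * n : ℤ)) (N * n)).Nonempty := nonempty_Icc.2 (neg_le_self (by positivity))
  simpa only [hcard] using exists_pow_sum_div_card_le_walkDist h0 ha hT hST

theorem sq_le_returnProb_two_mul {a : ℤ → ℝ} (h0 : 0 ≤ a) (ha : Summable a)
    (hsym : ∀ n : ℤ, a n = a (-n)) (N n : ℕ) :
    ((∑ x ∈ Icc (-(N : ℤ)) N, a x) ^ n / (2 * N * n + 1)) ^ 2 ≤ returnProb a (2 * n) := by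
  obtain ⟨k, hk⟩ := exists_pow_sum_Icc_div_le_walkDist h0 ha N n
  calc _ ≤ walkDist a n k * walkDist a n (-k) := by
        rw [walkDist_neg hsym, sq]
        have hq : 0 ≤ (∑ x ∈ Icc (-(N : ℤ)) N, a x) ^ n / (2 * N * n + 1) :=
          div_nonneg (pow_nonneg (sum_nonneg fun x _ => h0 x) n) (by positivity)
        exact mul_self_le_mul_self hq hk
    _ ≤ walkDist a (n + n) (k + -k) := mul_walkDist_le_walkDist_add h0 ha n n k (-k)
    _ = returnProb a (2 * n) := by rw [add_neg_cancel, ← two_mul]; rfl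

theorem le_returnProb_two_mul_rpow {a : ℤ → ℝ} (h0 : 0 ≤ a) (ha : Summable a)
    (hsym : ∀ n : ℤ, a n = a (-n)) (N : ℕ) {n : ℕ} (hn : n ≠ 0) :
    (∑ x ∈ Icc (-(N : ℤ)) N, a x) / (2 * N * n + 1) ^ (1 / (n : ℝ)) ≤
      returnProb a (2 * n) ^ (1 / (2 * (n : ℝ))) := by
  set m := ∑ x ∈ Icc (-(N : ℤ)) N, a x
  set q := m ^ n / (2 * N * n + 1)
  have hm : 0 ≤ m := sum_nonneg fun x _ => h0 x
  have hq : 0 ≤ q := by positivity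
  have hroot : (q ^ 2) ^ (1 / (2 * (n : ℝ))) = m / (2 * N * n + 1) ^ (1 / (n : ℝ)) := by
    have hexp : ((2 : ℕ) : ℝ) * (1 / (2 * (n : ℝ))) = 1 / n := by push_cast; field_simp
    rw [← Real.rpow_natCast, ← Real.rpow_mul hq, hexp,
      Real.div_rpow (pow_nonneg hm n) (by positivity), one_div, Real.pow_rpow_inv_natCast hm hn]
  rw [← hroot]
  exact Real.rpow_le_rpow (by positivity) (sq_le_returnProb_two_mul h0 ha hsym N n) (by positivity)

theorem tendsto_mul_add_one_rpow_one_div {c : ℝ} (hc : 0 ≤ c) :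
    Tendsto (fun n : ℕ => (c * n + 1) ^ (1 / (n : ℝ))) atTop (𝓝 1) := by
  rcases hc.eq_or_lt with rfl | hc
  · simp
  have hlin : Tendsto (fun n : ℕ => c * n + 1) atTop atTop :=
    tendsto_atTop_add_const_right _ _ (tendsto_natCast_atTop_atTop.const_mul_atTop hc)
  refine ((tendsto_rpow_div_mul_add c 1 (-1) one_ne_zero.symm).comp hlin).congr' ?_
  filter_upwards [eventually_ne_atTop 0] with n hn
  simp only [Function.comp_apply]
  congr 1
  field_simp
  ring

theorem tendsto_returnProb_two_mul_rpow {a : ℤ → ℝ} (h0 : 0 ≤ a) (ha : HasSum a 1)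
    (hsym : ∀ n : ℤ, a n = a (-n)) :
    Tendsto (fun n : ℕ => returnProb a (2 * n) ^ (1 / (2 * (n : ℝ)))) atTop (𝓝 1) := by
  refine tendsto_order.2 ⟨fun y hy => ?_, fun y hy => ?_⟩
  · obtain ⟨t, hyt, ht1⟩ := exists_between hy
    obtain ⟨N, hN⟩ := ((ha.comp tendsto_Icc_neg).eventually (lt_mem_nhds ht1)).exists
    have hlim : Tendsto (fun n : ℕ => t / (2 * N * n + 1) ^ (1 / (n : ℝ))) atTop (𝓝 t) := by
      have := (tendsto_const_nhds (x := t)).div (tendsto_mul_add_one_rpow_one_div (c := 2 * N)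
        (by positivity)) one_ne_zero
      rwa [div_one] at this
    filter_upwards [hlim.eventually (lt_mem_nhds hyt), eventually_ne_atTop 0] with n hyn hn
    refine hyn.trans_le (le_trans ?_ (le_returnProb_two_mul_rpow h0 ha.summable hsym N hn))
    exact div_le_div_of_nonneg_right hN.le (by positivity)
  · refine Eventually.of_forall fun n => lt_of_le_of_lt ?_ hy
    exact Real.rpow_le_one (walkDist_nonneg h0 _ 0)
      ((walkDist_le_pow h0 ha _ 0).trans_eq (one_pow _)) (by positivity)

/-- For a symmetric random walk, `limsup (c_(2n))^(1/(2n)) = 1`. -/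
theorem limsup_even_returnProb_rpow (a : ℤ → ℝ) (ha : IsRandomWalk a)
    (hsym : ∀ n : ℤ, a n = a (-n)) :
    Filter.limsup (fun n : ℕ => (returnProb a (2 * n)) ^ (1 / (2 * (n : ℝ))))
      Filter.atTop = 1 := by
  obtain ⟨h0, hsum, -⟩ := ha
  have hsummable : Summable a := by
    by_contra h
    simp [tsum_eq_zero_of_not_summable h] at hsum
  exact (tendsto_returnProb_two_mul_rpow h0 (hsum ▸ hsummable.hasSum) hsym).limsup_eq
end
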